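/- arXiv:1910.13431 — 9 statements merged into one kernel-verified Lean document; each statement's English description precedes it below -/
import Mathlib

section
/- The quadratic polynomial V(x,y) = D²x² − DTxy + Dy² + a(T² − 2D)x − aTy + a² is an inverse integrating factor of the Liénard system: for all (x,y) ∈ ℝ², the identity ∂V/∂x(x,y)·(Tx − y) + ∂V/∂y(x,y)·(Dx − a) = T·V(x,y) holds (note that the divergence of the vector field L equals T). -/
/-- The quadratic inverse integrating factor
`V(x,y) = D²x² − DTxy + Dy² + a(T² − 2D)x − aTy + a²`. -/
noncomputable def V (a T D x y : ℝ) : ℝ :=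
  D ^ 2 * x ^ 2 - D * T * x * y + D * y ^ 2 + a * (T ^ 2 - 2 * D) * x - a * T * y + a ^ 2

/-- `V` is an inverse integrating factor of the Liénard system
`x' = Tx − y`, `y' = Dx − a`: the identity
`∂V/∂x · (Tx − y) + ∂V/∂y · (Dx − a) = T · V` holds everywhere. -/
theorem stmt_0 (a T D : ℝ) (x y : ℝ) :
    deriv (fun x' => V a T D x' y) x * (T * x - y)
      + deriv (fun y' => V a T D x y') y * (D * x - a)
      = T * V a T D x y := by
  have hx : HasDerivAt (fun x' : ℝ => V a T D x' y)
      (2 * D ^ 2 * x - D * T * y + a * (T ^ 2 - 2 * D)) x := by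
    have h := (((((hasDerivAt_pow 2 x).const_mul (D ^ 2)).sub
        (((hasDerivAt_id x).const_mul (D * T)).mul_const y)).add_const
        (D * y ^ 2)).add ((hasDerivAt_id x).const_mul (a * (T ^ 2 - 2 * D)))).sub_const
        (a * T * y) |>.add_const (a ^ 2)
    refine h.congr_deriv ?_
    push_cast
    ring
  have hy : HasDerivAt (fun y' : ℝ => V a T D x y')
      (-(D * T * x) + 2 * D * y - a * T) y := by
    have h := ((((hasDerivAt_const y (D ^ 2 * x ^ 2)).sub
        ((hasDerivAt_id y).const_mul (D * T * x))).add
        ((hasDerivAt_pow 2 y).const_mul D)).add_const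
        (a * (T ^ 2 - 2 * D) * x)).sub ((hasDerivAt_id y).const_mul (a * T))
        |>.add_const (a ^ 2)
    refine h.congr_deriv ?_
    push_cast
    ring
  rw [hx.deriv, hy.deriv]
  unfold V
  ring
end

section
/- Assume a² + D² ≠ 0 and T ≠ 0. A polynomial function W(x,y) = Σ_{0 ≤ i+j ≤ 2} α_{ij} x^i y^j of total degree at most two satisfies ∂W/∂x(x,y)·(Tx − y) + ∂W/∂y(x,y)·(Dx − a) = T·W(x,y) for all (x,y) ∈ ℝ² if and only if W = λ·V for some real constant λ, where V(x,y) = D²x² − DTxy + Dy² + a(T² − 2D)x − aTy + a². In other words, the space of quadratic inverse integrating factors is one-dimensional, spanned by V. -/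
/-- A generic polynomial of total degree at most two in two variables,
`W(x,y) = Σ_{0 ≤ i+j ≤ 2} α_{ij} x^i y^j`. -/
noncomputable def W (α₀₀ α₁₀ α₀₁ α₂₀ α₁₁ α₀₂ x y : ℝ) : ℝ :=
  α₀₀ + α₁₀ * x + α₀₁ * y + α₂₀ * x ^ 2 + α₁₁ * x * y + α₀₂ * y ^ 2

theorem hasDerivAt_quadratic (p q r t : ℝ) :
    HasDerivAt (fun s : ℝ => p + q * s + r * s ^ 2) (q + 2 * r * t) t := by
  have h := (((hasDerivAt_id' t).const_mul q).const_add p).add ((hasDerivAt_pow 2 t).const_mul r)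
  exact h.congr_deriv (by ring)

section W

variable (α₀₀ α₁₀ α₀₁ α₂₀ α₁₁ α₀₂ x y : ℝ)

theorem deriv_W_fst :
    deriv (fun x' => W α₀₀ α₁₀ α₀₁ α₂₀ α₁₁ α₀₂ x' y) x = α₁₀ + 2 * α₂₀ * x + α₁₁ * y := by
  have hW : (fun x' => W α₀₀ α₁₀ α₀₁ α₂₀ α₁₁ α₀₂ x' y) =
      fun x' => (α₀₀ + α₀₁ * y + α₀₂ * y ^ 2) + (α₁₀ + α₁₁ * y) * x' + α₂₀ * x' ^ 2 := by
    funext x'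
    simp only [W]
    ring
  rw [hW, (hasDerivAt_quadratic _ _ _ x).deriv]
  ring

theorem deriv_W_snd :
    deriv (fun y' => W α₀₀ α₁₀ α₀₁ α₂₀ α₁₁ α₀₂ x y') y = α₀₁ + α₁₁ * x + 2 * α₀₂ * y := by
  have hW : (fun y' => W α₀₀ α₁₀ α₀₁ α₂₀ α₁₁ α₀₂ x y') =
      fun y' => (α₀₀ + α₁₀ * x + α₂₀ * x ^ 2) + (α₀₁ + α₁₁ * x) * y' + α₀₂ * y' ^ 2 := by
    funext y'
    simp only [W]
    ring
  rw [hW, (hasDerivAt_quadratic _ _ _ y).deriv]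

end W

theorem forall_W_eq_zero_iff (b₀₀ b₁₀ b₀₁ b₂₀ b₁₁ b₀₂ : ℝ) :
    (∀ x y, W b₀₀ b₁₀ b₀₁ b₂₀ b₁₁ b₀₂ x y = 0) ↔
      b₀₀ = 0 ∧ b₁₀ = 0 ∧ b₀₁ = 0 ∧ b₂₀ = 0 ∧ b₁₁ = 0 ∧ b₀₂ = 0 := by
  refine ⟨fun h => ?_, fun ⟨h₀₀, h₁₀, h₀₁, h₂₀, h₁₁, h₀₂⟩ x y => by simp [W, *]⟩
  have h00 := h 0 0
  have h10 := h 1 0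
  have hm10 := h (-1) 0
  have h01 := h 0 1
  have h0m1 := h 0 (-1)
  have h11 := h 1 1
  norm_num [W] at h00 h10 hm10 h01 h0m1 h11
  refine ⟨?_, ?_, ?_, ?_, ?_, ?_⟩ <;> linarith

section Coefficients

variable {a T D α₀₀ α₁₀ α₀₁ α₂₀ α₁₁ α₀₂ : ℝ}

theorem lie_W_eq_trace_mul_W_iff :
    (∀ x y : ℝ,
        deriv (fun x' => W α₀₀ α₁₀ α₀₁ α₂₀ α₁₁ α₀₂ x' y) x * (T * x - y)
          + deriv (fun y' => W α₀₀ α₁₀ α₀₁ α₂₀ α₁₁ α₀₂ x y') y * (D * x - a)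
          = T * W α₀₀ α₁₀ α₀₁ α₂₀ α₁₁ α₀₂ x y) ↔
      -(a * α₀₁) - T * α₀₀ = 0 ∧ D * α₀₁ - a * α₁₁ = 0 ∧ -α₁₀ - 2 * a * α₀₂ - T * α₀₁ = 0 ∧
        T * α₂₀ + D * α₁₁ = 0 ∧ 2 * D * α₀₂ - 2 * α₂₀ = 0 ∧ -α₁₁ - T * α₀₂ = 0 := by
  rw [← forall_W_eq_zero_iff]
  refine forall₂_congr fun x y => ?_
  have residual : deriv (fun x' => W α₀₀ α₁₀ α₀₁ α₂₀ α₁₁ α₀₂ x' y) x * (T * x - y)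
      + deriv (fun y' => W α₀₀ α₁₀ α₀₁ α₂₀ α₁₁ α₀₂ x y') y * (D * x - a)
      - T * W α₀₀ α₁₀ α₀₁ α₂₀ α₁₁ α₀₂ x y =
      W (-(a * α₀₁) - T * α₀₀) (D * α₀₁ - a * α₁₁) (-α₁₀ - 2 * a * α₀₂ - T * α₀₁)
        (T * α₂₀ + D * α₁₁) (2 * D * α₀₂ - 2 * α₂₀) (-α₁₁ - T * α₀₂) x y := by
    rw [deriv_W_fst, deriv_W_snd]
    simp only [W]
    ring
  rw [← sub_eq_zero, residual]

theorem forall_W_eq_mul_V_iff (lam : ℝ) :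
    (∀ x y, W α₀₀ α₁₀ α₀₁ α₂₀ α₁₁ α₀₂ x y = lam * V a T D x y) ↔
      α₀₀ - lam * a ^ 2 = 0 ∧ α₁₀ - lam * (a * (T ^ 2 - 2 * D)) = 0 ∧
        α₀₁ + lam * (a * T) = 0 ∧ α₂₀ - lam * D ^ 2 = 0 ∧ α₁₁ + lam * (D * T) = 0 ∧
          α₀₂ - lam * D = 0 := by
  rw [← forall_W_eq_zero_iff]
  refine forall₂_congr fun x y => ?_
  have difference : W α₀₀ α₁₀ α₀₁ α₂₀ α₁₁ α₀₂ x y - lam * V a T D x y =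
      W (α₀₀ - lam * a ^ 2) (α₁₀ - lam * (a * (T ^ 2 - 2 * D))) (α₀₁ + lam * (a * T))
        (α₂₀ - lam * D ^ 2) (α₁₁ + lam * (D * T)) (α₀₂ - lam * D) x y := by
    simp only [W, V]
    ring
  rw [← sub_eq_zero, difference]

theorem coefficient_system_iff (haD : a ^ 2 + D ^ 2 ≠ 0) (hT : T ≠ 0) :
    (-(a * α₀₁) - T * α₀₀ = 0 ∧ D * α₀₁ - a * α₁₁ = 0 ∧ -α₁₀ - 2 * a * α₀₂ - T * α₀₁ = 0 ∧
        T * α₂₀ + D * α₁₁ = 0 ∧ 2 * D * α₀₂ - 2 * α₂₀ = 0 ∧ -α₁₁ - T * α₀₂ = 0) ↔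
      ∃ lam : ℝ, α₀₀ - lam * a ^ 2 = 0 ∧ α₁₀ - lam * (a * (T ^ 2 - 2 * D)) = 0 ∧
        α₀₁ + lam * (a * T) = 0 ∧ α₂₀ - lam * D ^ 2 = 0 ∧ α₁₁ + lam * (D * T) = 0 ∧
          α₀₂ - lam * D = 0 := by
  constructor
  · rintro ⟨h₀₀, h₁₀, h₀₁, -, h₁₁, h₀₂⟩
    by_cases hD : D = 0
    · subst hD
      have ha : a ≠ 0 := by rintro rfl; simp at haD
      obtain rfl : α₁₁ = 0 := by simpa [ha] using h₁₀
      obtain rfl : α₀₂ = 0 := by simpa [hT] using h₀₂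
      obtain rfl : α₂₀ = 0 := by linarith
      refine ⟨-α₀₁ / (a * T), ?_, ?_, ?_, ?_, ?_, ?_⟩ <;> field_simp
      · linear_combination -h₀₀
      · linear_combination -T * h₀₁
      all_goals ring
    · have e₂₀ : α₂₀ = D * α₀₂ := by linear_combination -h₁₁ / 2
      have e₁₁ : α₁₁ = -T * α₀₂ := by linear_combination -h₀₂
      have e₀₁ : D * α₀₁ = -(a * T * α₀₂) := by linear_combination h₁₀ - a * h₀₂
      have e₁₀ : D * α₁₀ = a * (T ^ 2 - 2 * D) * α₀₂ := by linear_combination -D * h₀₁ - T * e₀₁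
      have e₀₀ : D * α₀₀ = a ^ 2 * α₀₂ := mul_left_cancel₀ hT <| by
        linear_combination -D * h₀₀ - a * h₁₀ + a ^ 2 * h₀₂
      refine ⟨α₀₂ / D, ?_, ?_, ?_, ?_, ?_, ?_⟩ <;> field_simp
      · linear_combination e₀₀
      · linear_combination e₁₀
      · linear_combination e₀₁
      · linear_combination e₂₀
      · linear_combination e₁₁
      · ring
  · rintro ⟨lam, h₀₀, h₁₀, h₀₁, h₂₀, h₁₁, h₀₂⟩
    obtain rfl : α₀₀ = lam * a ^ 2 := by linarith
    obtain rfl : α₁₀ = lam * (a * (T ^ 2 - 2 * D)) := by linarith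
    obtain rfl : α₀₁ = -(lam * (a * T)) := by linarith
    obtain rfl : α₂₀ = lam * D ^ 2 := by linarith
    obtain rfl : α₁₁ = -(lam * (D * T)) := by linarith
    obtain rfl : α₀₂ = lam * D := by linarith
    refine ⟨?_, ?_, ?_, ?_, ?_, ?_⟩ <;> ring

end Coefficients

/-- For `a² + D² ≠ 0` and `T ≠ 0`, a polynomial of degree at most two satisfies
`∇W · L = T·W` (with `L(x,y) = (Tx − y, Dx − a)`) if and only if it is a scalar
multiple of `V`: the space of quadratic inverse integrating factors is spanned by `V`. -/
theorem stmt_1 (a T D : ℝ) (haD : a ^ 2 + D ^ 2 ≠ 0) (hT : T ≠ 0)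
    (α₀₀ α₁₀ α₀₁ α₂₀ α₁₁ α₀₂ : ℝ) :
    (∀ x y : ℝ,
        deriv (fun x' => W α₀₀ α₁₀ α₀₁ α₂₀ α₁₁ α₀₂ x' y) x * (T * x - y)
          + deriv (fun y' => W α₀₀ α₁₀ α₀₁ α₂₀ α₁₁ α₀₂ x y') y * (D * x - a)
          = T * W α₀₀ α₁₀ α₀₁ α₂₀ α₁₁ α₀₂ x y)
      ↔ ∃ lam : ℝ, ∀ x y : ℝ,
          W α₀₀ α₁₀ α₀₁ α₂₀ α₁₁ α₀₂ x y = lam * V a T D x y := by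
  simp only [lie_W_eq_trace_mul_W_iff, forall_W_eq_mul_V_iff]
  exact coefficient_system_iff haD hT
end

section
/- Assume D ≠ 0 and T² − 4D < 0. Then the zero set of V is exactly the equilibrium point of the system: V(x,y) = 0 if and only if x = a/D and y = aT/D. -/
theorem sq_add_mul_sq_eq_zero_iff {R : Type*} [Field R] [LinearOrder R] [IsStrictOrderedRing R]
    {c : R} (hc : 0 < c) (p q : R) : p ^ 2 + c * q ^ 2 = 0 ↔ p = 0 ∧ q = 0 := by
  rw [add_eq_zero_iff_of_nonneg (sq_nonneg p) (by positivity), mul_eq_zero_iff_left hc.ne',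
    pow_eq_zero_iff two_ne_zero, pow_eq_zero_iff two_ne_zero]

theorem four_mul_V_eq (a T D x y : ℝ) :
    4 * D * V a T D x y =
      (2 * D * y - D * T * x - a * T) ^ 2 + (4 * D - T ^ 2) * (D * x - a) ^ 2 := by
  unfold V
  ring

theorem linear_forms_eq_zero_iff {a T D : ℝ} (hD : D ≠ 0) (x y : ℝ) :
    2 * D * y - D * T * x - a * T = 0 ∧ D * x - a = 0 ↔ x = a / D ∧ y = a * T / D := by
  rw [eq_div_iff hD, eq_div_iff hD]
  constructor
  · rintro ⟨hy, hx⟩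
    exact ⟨by linear_combination hx,
      by linear_combination (1 / 2 : ℝ) * hy + T / 2 * hx⟩
  · rintro ⟨hx, hy⟩
    exact ⟨by linear_combination 2 * hy - T * hx, by linear_combination hx⟩

theorem stmt_3_general (a T D : ℝ) (h : T ^ 2 - 4 * D < 0) (x y : ℝ) :
    V a T D x y = 0 ↔ x = a / D ∧ y = a * T / D := by
  have hD : 0 < D := by nlinarith [sq_nonneg T]
  rw [← mul_eq_zero_iff_left (by positivity : (4 * D : ℝ) ≠ 0), four_mul_V_eq,
    sq_add_mul_sq_eq_zero_iff (by linarith), linear_forms_eq_zero_iff hD.ne']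

/-- If `D ≠ 0` and `T² − 4D < 0`, the zero set of `V` is exactly the equilibrium
point `(a/D, aT/D)` of the system. -/
theorem stmt_3 (a T D : ℝ) (hD : D ≠ 0) (h : T ^ 2 - 4 * D < 0) (x y : ℝ) :
    V a T D x y = 0 ↔ x = a / D ∧ y = a * T / D :=
  stmt_3_general a T D h x y
end

section
/- Let Ψ = (Ψ₁, Ψ₂) : ℝ → ℝ² be differentiable and satisfy Ψ₁'(t) = TΨ₁(t) − Ψ₂(t) and Ψ₂'(t) = DΨ₁(t) − a for all t ∈ ℝ. Then for every t ∈ ℝ, V(Ψ₁(t), Ψ₂(t)) = e^{Tt} · V(Ψ₁(0), Ψ₂(0)); in particular, the inverse integrating factor V grows along trajectories by the exponential of the trace T times the elapsed time. -/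
/-- Along any solution `Ψ = (Ψ₁, Ψ₂)` of the Liénard system `x' = Tx − y`,
`y' = Dx − a`, the inverse integrating factor evolves as
`V(Ψ(t)) = e^{Tt} · V(Ψ(0))`. -/
theorem stmt_5 (a T D : ℝ) (Ψ₁ Ψ₂ : ℝ → ℝ)
    (h₁ : ∀ t : ℝ, HasDerivAt Ψ₁ (T * Ψ₁ t - Ψ₂ t) t)
    (h₂ : ∀ t : ℝ, HasDerivAt Ψ₂ (D * Ψ₁ t - a) t) :
    ∀ t : ℝ, V a T D (Ψ₁ t) (Ψ₂ t) = Real.exp (T * t) * V a T D (Ψ₁ 0) (Ψ₂ 0) := by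
  have HW : ∀ t : ℝ, HasDerivAt (fun s => V a T D (Ψ₁ s) (Ψ₂ s))
      (T * V a T D (Ψ₁ t) (Ψ₂ t)) t := by
    intro t
    have hx := h₁ t
    have hy := h₂ t
    have H1 := (((((((hx.pow 2).const_mul (D ^ 2)).sub
      (((hx.const_mul (D * T)).mul hy))).add ((hy.pow 2).const_mul D)).add
      (hx.const_mul (a * (T ^ 2 - 2 * D)))).sub (hy.const_mul (a * T))).add
      (hasDerivAt_const t (a ^ 2)))
    have heq : (fun s => V a T D (Ψ₁ s) (Ψ₂ s)) =
        (fun s => D ^ 2 * Ψ₁ s ^ 2 - D * T * Ψ₁ s * Ψ₂ s + D * Ψ₂ s ^ 2 +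
          a * (T ^ 2 - 2 * D) * Ψ₁ s - a * T * Ψ₂ s + a ^ 2) := by
      funext s; simp only [V]
    rw [heq]
    refine H1.congr_deriv ?_
    simp only [V]
    push_cast
    ring
  -- g s = exp (-(T s)) * V(Ψ s) is constant
  set g : ℝ → ℝ := fun s => Real.exp (-(T * s)) * V a T D (Ψ₁ s) (Ψ₂ s) with hg
  have hgd : ∀ s : ℝ, HasDerivAt g 0 s := by
    intro s
    have he : HasDerivAt (fun u : ℝ => Real.exp (-(T * u))) (-T * Real.exp (-(T * s))) s := by
      have : HasDerivAt (fun u : ℝ => -(T * u)) (-T) s := by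
        simpa using ((hasDerivAt_id s).const_mul (-T))
      simpa [mul_comm] using this.exp
    have := he.mul (HW s)
    refine this.congr_deriv ?_
    ring
  have hconst : ∀ t : ℝ, g t = g 0 := by
    intro t
    have : g = fun _ => g 0 := by
      funext u
      exact (is_const_of_deriv_eq_zero (fun s => (hgd s).differentiableAt)
        (fun s => (hgd s).deriv) u 0)
    rw [this]
  intro t
  have h := hconst t
  simp only [hg, mul_zero, neg_zero, Real.exp_zero, one_mul] at h
  calc V a T D (Ψ₁ t) (Ψ₂ t)
      = Real.exp (T * t) * (Real.exp (-(T * t)) * V a T D (Ψ₁ t) (Ψ₂ t)) := by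
        rw [← mul_assoc, ← Real.exp_add]; simp
    _ = Real.exp (T * t) * V a T D (Ψ₁ 0) (Ψ₂ 0) := by rw [h]
end

section
/- Assume a = 0, D ≠ 0, and that hypothesis (H) holds with y₀ > 0 (scenario (S₁): the equilibrium of the system is the origin, which lies on the Poincaré section). Then 4D − T² > 0, y₁ < 0, and the Cauchy principal value identity lim_{ε → 0⁺} ( ∫_{y₁}^{−ε} (−1)/(Dy) dy + ∫_{ε}^{y₀} (−1)/(Dy) dy ) = πT / (D·√(4D − T²)) holds. -/
open Set Real Filter

private lemma exp_sol' {f : ℝ → ℂ} {c : ℂ}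
    (hf : ∀ t : ℝ, HasDerivAt f (c * f t) t) (t : ℝ) :
    f t = f 0 * Complex.exp (c * t) := by
  have hexp : ∀ u : ℝ, HasDerivAt (fun v : ℝ => Complex.exp (-(c * v)))
      (Complex.exp (-(c * u)) * (-(c * 1))) u := fun u =>
    (((hasDerivAt_id u).ofReal_comp.const_mul c).neg).cexp
  have hd : ∀ u : ℝ, HasDerivAt (fun v : ℝ => Complex.exp (-(c * v)) * f v) 0 u := by
    intro u
    have := (hexp u).mul (hf u)
    refine this.congr_deriv (Eq.symm ?_)
    ring
  have hconst : ∀ u : ℝ, Complex.exp (-(c * u)) * f u = Complex.exp (-(c * 0)) * f 0 :=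
    fun u => is_const_of_deriv_eq_zero (fun v => (hd v).differentiableAt)
      (fun v => (hd v).deriv) u 0
  have h := hconst t
  simp only [Complex.ofReal_zero, mul_zero, neg_zero, Complex.exp_zero, one_mul] at h
  have h2 : Complex.exp (c * t) * (Complex.exp (-(c * t)) * f t) = f t := by
    rw [← mul_assoc, ← Complex.exp_add]
    simp
  rw [← h2, h, mul_comm]

private lemma lin_sol' {f : ℝ → ℂ} {k : ℂ}
    (hf : ∀ t : ℝ, HasDerivAt f k t) (t : ℝ) :
    f t = f 0 + k * t := by
  have hd : ∀ u : ℝ, HasDerivAt (fun v : ℝ => f v - k * v) 0 u := by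
    intro u
    have := (hf u).sub ((hasDerivAt_id u).ofReal_comp.const_mul k)
    exact this.congr_deriv (by simp)
  have hconst := is_const_of_deriv_eq_zero (f := fun v : ℝ => f v - k * v)
    (fun v => (hd v).differentiableAt) (fun v => (hd v).deriv) t 0
  simp only [Complex.ofReal_zero, mul_zero, sub_zero] at hconst
  linear_combination hconst

set_option maxHeartbeats 1000000 in
/-- Scenario (S₁): for `a = 0` (equilibrium at the origin, lying on the section),
under hypothesis (H) with `y₀ > 0`, one has `4D − T² > 0`, `y₁ < 0`, and the
Cauchy principal value identity
`PV ∫_{y₁}^{y₀} (−1)/(Dy) dy = πT/(D·√(4D − T²))`. -/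
theorem stmt_7 (T D : ℝ) (hD : D ≠ 0)
    (Ψ₁ Ψ₂ : ℝ → ℝ)
    (h₁ : ∀ t : ℝ, HasDerivAt Ψ₁ (T * Ψ₁ t - Ψ₂ t) t)
    (h₂ : ∀ t : ℝ, HasDerivAt Ψ₂ (D * Ψ₁ t) t)
    (y₀ : ℝ) (hy₀ : 0 < y₀) (hΨ0 : Ψ₁ 0 = 0 ∧ Ψ₂ 0 = y₀)
    (τ : ℝ) (hτ : 0 < τ) (hret : Ψ₁ τ = 0) (hneg : ∀ t ∈ Ioo 0 τ, Ψ₁ t < 0)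
    (y₁ : ℝ) (hy₁ : y₁ = Ψ₂ τ) :
    0 < 4 * D - T ^ 2 ∧ y₁ < 0 ∧
      Tendsto
        (fun ε : ℝ =>
          (∫ y in y₁..(-ε), (-1) / (D * y)) + ∫ y in ε..y₀, (-1) / (D * y))
        (nhdsWithin 0 (Ioi 0))
        (nhds (π * T / (D * Real.sqrt (4 * D - T ^ 2)))) := by
  obtain ⟨hΨ10, hΨ20⟩ := hΨ0
  obtain ⟨s, hs⟩ := IsAlgClosed.exists_pow_nat_eq ((T : ℂ) ^ 2 - 4 * D) (n := 2) (by norm_num)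
  set l : ℂ := ((T : ℂ) + s) / 2 with hl_def
  set m : ℂ := ((T : ℂ) - s) / 2 with hm_def
  have hlm_sum : l + m = (T : ℂ) := by rw [hl_def, hm_def]; ring
  have hlm_sub : l - m = s := by rw [hl_def, hm_def]; ring
  have hlm_mul : l * m = (D : ℂ) := by
    have h : l * m = ((T : ℂ) ^ 2 - s ^ 2) / 4 := by rw [hl_def, hm_def]; ring
    rw [h, hs]; ring
  have hl2 : l ^ 2 = T * l - D := by
    rw [← hlm_mul]
    linear_combination l * hlm_sum
  set P1 : ℝ → ℂ := fun t => ((Ψ₁ t : ℝ) : ℂ) with hP1_def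
  set P2 : ℝ → ℂ := fun t => ((Ψ₂ t : ℝ) : ℂ) with hP2_def
  have hP1 : ∀ t, HasDerivAt P1 ((T : ℂ) * P1 t - P2 t) t := by
    intro t
    have := (h₁ t).ofReal_comp
    convert this using 1
    push_cast
    ring
  have hP2 : ∀ t, HasDerivAt P2 ((D : ℂ) * P1 t) t := by
    intro t
    have := (h₂ t).ofReal_comp
    convert this using 1
    push_cast
    ring
  set z : ℝ → ℂ := fun t => l * P1 t - P2 t with hz_def
  have hz : ∀ t, HasDerivAt z (l * z t) t := by
    intro t
    have := ((hP1 t).const_mul l).sub (hP2 t)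
    refine this.congr_deriv (Eq.symm ?_)
    simp only [hz_def]
    linear_combination P1 t * hl2
  have hz0 : z 0 = -(y₀ : ℂ) := by
    simp [hz_def, hP1_def, hP2_def, hΨ10, hΨ20]
  have hzc : ∀ t : ℝ, z t = -(y₀ : ℂ) * Complex.exp (l * t) := by
    intro t; rw [exp_sol' hz t, hz0]
  have hP1τ : P1 τ = 0 := by simp [hP1_def, hret]
  have hy₀C : (y₀ : ℂ) ≠ 0 := Complex.ofReal_ne_zero.mpr hy₀.ne'
  have hτC : (τ : ℂ) ≠ 0 := Complex.ofReal_ne_zero.mpr hτ.ne'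
  -- rule out the double-root case s = 0
  have hs0 : s ≠ 0 := by
    intro hs0
    have hT : (T : ℂ) = 2 * l := by rw [hl_def, hs0]; ring
    have hu : ∀ t : ℝ, HasDerivAt (fun v : ℝ => Complex.exp (-(l * v)) * P1 v) (-(y₀ : ℂ)) t := by
      intro t
      have hd := ((((hasDerivAt_id t).ofReal_comp.const_mul l).neg).cexp).mul (hP1 t)
      simp only [id_eq, Complex.ofReal_one] at hd
      refine hd.congr_deriv (Eq.symm ?_)
      have e1 : Complex.exp (-(l * t)) * (-(l * 1)) * P1 t
          + Complex.exp (-(l * t)) * ((T : ℂ) * P1 t - P2 t)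
          = Complex.exp (-(l * t)) * z t := by
        simp only [hz_def]
        rw [hT]; ring
      show -(y₀ : ℂ) = Complex.exp (-(l * t)) * (-(l * 1)) * P1 t
          + Complex.exp (-(l * t)) * ((T : ℂ) * P1 t - P2 t)
      rw [e1, hzc t, show -(y₀ : ℂ) * Complex.exp (l * t) = Complex.exp (l * t) * -(y₀:ℂ) by ring,
        ← mul_assoc, ← Complex.exp_add]
      simp
    have := lin_sol' hu τ
    simp only [hP1_def, hret, hΨ10, Complex.ofReal_zero, mul_zero, zero_add] at this
    have : (y₀ : ℂ) * τ = 0 := by linear_combination this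
    rcases mul_eq_zero.mp this with h | h
    · exact hy₀C h
    · exact hτC h
  -- from the return condition: exp(s τ) = 1
  have hform : ∀ t : ℝ, s * P1 t = -(y₀ : ℂ) * (Complex.exp (l * t) - Complex.exp (m * t)) := by
    intro t
    have hw : ∀ u, HasDerivAt (fun v : ℝ => m * P1 v - P2 v) (m * (m * P1 u - P2 u)) u := by
      intro u
      have := ((hP1 u).const_mul m).sub (hP2 u)
      refine this.congr_deriv (Eq.symm ?_)
      have hm2 : m ^ 2 = T * m - D := by
        rw [← hlm_mul]
        linear_combination m * hlm_sum
      linear_combination P1 u * hm2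
    have hwc := exp_sol' hw t
    simp only [hΨ10, hΨ20, hP1_def, hP2_def] at hwc
    push_cast at hwc
    simp only [mul_zero, zero_sub] at hwc
    have hzt := hzc t
    simp only [hz_def] at hzt
    calc s * P1 t = (l * P1 t - P2 t) - (m * P1 t - P2 t) := by
          rw [← hlm_sub]; ring
      _ = -(y₀ : ℂ) * (Complex.exp (l * t) - Complex.exp (m * t)) := by
          rw [hzt, hwc]; ring
  have hexp_eq : Complex.exp (s * τ) = 1 := by
    have h := hform τ
    rw [hP1τ, mul_zero] at h
    have h2 : Complex.exp (l * τ) = Complex.exp (m * τ) := by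
      have := mul_eq_zero.mp h.symm
      rcases this with h' | h'
      · exact absurd (neg_eq_zero.mp h') hy₀C
      · exact sub_eq_zero.mp h'
    have : Complex.exp (l * τ - m * τ) = 1 := by
      rw [Complex.exp_sub, h2, div_self (Complex.exp_ne_zero _)]
    rw [show s * (τ:ℂ) = l * τ - m * τ by rw [← hlm_sub]; ring]
    exact this
  obtain ⟨n, hn⟩ := Complex.exp_eq_one_iff.mp hexp_eq
  have hn0 : n ≠ 0 := by
    rintro rfl
    simp only [Int.cast_zero, zero_mul] at hn
    exact hs0 (by rcases mul_eq_zero.mp hn with h | h; exact h; exact absurd h hτC)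
  set σ : ℝ := 2 * π * n / τ with hσ_def
  have hσ0 : σ ≠ 0 := by
    rw [hσ_def]
    apply div_ne_zero _ hτ.ne'
    have : (n : ℝ) ≠ 0 := Int.cast_ne_zero.mpr hn0
    positivity
  have hsσ : s = (σ : ℂ) * Complex.I := by
    rw [hσ_def]
    push_cast
    rw [div_mul_eq_mul_div, eq_div_iff hτC]
    linear_combination hn
  have hreal : σ ^ 2 = 4 * D - T ^ 2 := by
    have h : ((σ ^ 2 : ℝ) : ℂ) = ((4 * D - T ^ 2 : ℝ) : ℂ) := by
      push_cast
      have := hs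
      rw [hsσ] at this
      have hI : Complex.I ^ 2 = -1 := Complex.I_sq
      linear_combination -this + (σ:ℂ)^2 * hI
    exact_mod_cast h
  have hDT : 0 < 4 * D - T ^ 2 := by
    rw [← hreal]
    positivity
  -- real form of Ψ₁
  have hlt : ∀ t : ℝ, l * t = ((T * t / 2 : ℝ) : ℂ) + ((σ * t / 2 : ℝ) : ℂ) * Complex.I := by
    intro t
    rw [hl_def, hsσ]
    push_cast
    ring
  have key : ∀ t : ℝ, σ * Ψ₁ t = -(2 * y₀) * Real.exp (T * t / 2) * Real.sin (σ * t / 2) := by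
    intro t
    have h := hform t
    have hmt : m * t = ((T * t / 2 : ℝ) : ℂ) + ((-(σ * t / 2) : ℝ) : ℂ) * Complex.I := by
      rw [hm_def, hsσ]
      push_cast
      ring
    rw [hlt t, hmt, Complex.exp_add, Complex.exp_add, Complex.exp_mul_I, Complex.exp_mul_I,
      hsσ] at h
    simp only [Complex.ofReal_neg, Complex.cos_neg, Complex.sin_neg] at h
    have h2 : Complex.I * ((σ : ℂ) * P1 t)
        = Complex.I * (-(y₀ : ℂ) * Complex.exp ((T * t / 2 : ℝ) : ℂ)
            * (2 * Complex.sin ((σ * t / 2 : ℝ) : ℂ))) := by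
      linear_combination h
    have h3 := mul_left_cancel₀ Complex.I_ne_zero h2
    have h4 : ((σ * Ψ₁ t : ℝ) : ℂ)
        = ((-(2 * y₀) * Real.exp (T * t / 2) * Real.sin (σ * t / 2) : ℝ) : ℂ) := by
      push_cast
      simp only [hP1_def] at h3
      push_cast at h3
      linear_combination h3
    exact_mod_cast h4
  have hστ : σ * τ = 2 * π * n := by
    rw [hσ_def]
    field_simp
  -- n = ±1
  have hn1 : n = 1 ∨ n = -1 := by
    by_contra hcon
    push_neg at hcon
    have habs : (2 : ℝ) ≤ |(n : ℝ)| := by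
      have : (2 : ℤ) ≤ |n| := by
        rcases abs_cases n with ⟨he, _⟩ | ⟨he, _⟩ <;> omega
      calc (2:ℝ) = ((2:ℤ):ℝ) := by norm_num
        _ ≤ ((|n| : ℤ) : ℝ) := by exact_mod_cast this
        _ = |(n : ℝ)| := by push_cast; ring
    have hσabs : |σ| * τ = 2 * π * |(n : ℝ)| := by
      have : |σ * τ| = |2 * π * n| := by rw [hστ]
      rw [abs_mul, abs_of_pos hτ] at this
      rw [this, abs_mul, abs_of_pos (by positivity : (0:ℝ) < 2 * π)]
    set t' : ℝ := 3 * π / |σ| with ht'_def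
    have hσa : 0 < |σ| := abs_pos.mpr hσ0
    have ht'pos : 0 < t' := by positivity
    have ht'lt : t' < τ := by
      rw [ht'_def, div_lt_iff₀ hσa, mul_comm τ |σ|, hσabs]
      nlinarith [Real.pi_pos]
    have ht'mem : t' ∈ Ioo 0 τ := ⟨ht'pos, ht'lt⟩
    have hΨneg := hneg t' ht'mem
    have hsin32 : Real.sin (3 * π / 2) = -1 := by
      rw [show (3 * π / 2 : ℝ) = π + π / 2 by ring, Real.sin_add, Real.sin_pi, Real.cos_pi,
        Real.sin_pi_div_two]
      ring
    have hsin : Real.sin (σ * t' / 2) = -(σ / |σ|) := by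
      rcases lt_or_gt_of_ne hσ0 with h | h
      · have e0 : -(σ / |σ|) = 1 := by
          rw [abs_of_neg h, div_neg, div_self hσ0]; ring
        have e1 : σ * t' / 2 = -(3 * π / 2) := by
          rw [ht'_def, abs_of_neg h]
          field_simp
        rw [e0, e1, Real.sin_neg, hsin32]
        ring
      · have e0 : -(σ / |σ|) = -1 := by
          rw [abs_of_pos h, div_self hσ0]
        have e1 : σ * t' / 2 = 3 * π / 2 := by
          rw [ht'_def, abs_of_pos h]
          field_simp
        rw [e0, e1, hsin32]
    have hkey := key t'
    rw [hsin] at hkey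
    have : σ * Ψ₁ t' = 2 * y₀ * Real.exp (T * t' / 2) * (σ / |σ|) := by
      rw [hkey]; ring
    have hpos : 0 < σ * Ψ₁ t' / σ := by
      rw [this]
      rcases lt_or_gt_of_ne hσ0 with h | h
      · rw [abs_of_neg h]
        have : 2 * y₀ * Real.exp (T * t' / 2) * (σ / -σ) = -(2 * y₀ * Real.exp (T * t' / 2)) := by
          field_simp
        rw [this]
        have := Real.exp_pos (T * t' / 2)
        rw [div_pos_iff]
        right
        constructor <;> nlinarith
      · rw [abs_of_pos h]
        rw [div_self h.ne', mul_one]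
        positivity
    rw [mul_div_assoc, mul_comm] at hpos
    rw [div_mul_eq_mul_div, mul_div_assoc, div_self hσ0, mul_one] at hpos
    linarith
  -- compute y₁
  have hcos : Real.cos (σ * τ / 2) = -1 ∧ Real.sin (σ * τ / 2) = 0 := by
    rcases hn1 with rfl | rfl
    · rw [show σ * τ / 2 = π by rw [hστ]; push_cast; ring]
      exact ⟨Real.cos_pi, Real.sin_pi⟩
    · rw [show σ * τ / 2 = -π by rw [hστ]; push_cast; ring]
      rw [Real.cos_neg, Real.sin_neg, Real.sin_pi, Real.cos_pi]
      exact ⟨rfl, neg_zero⟩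
  have hy1form : y₁ = -(y₀ * Real.exp (T * τ / 2)) := by
    have hz := hzc τ
    simp only [hz_def, hP1τ, mul_zero, zero_sub] at hz
    have hP2τ : P2 τ = (y₀ : ℂ) * Complex.exp (l * τ) := by
      linear_combination -hz
    rw [hlt τ, Complex.exp_add, Complex.exp_mul_I] at hP2τ
    rw [← Complex.ofReal_cos, ← Complex.ofReal_sin, hcos.1, hcos.2] at hP2τ
    have h4 : ((Ψ₂ τ : ℝ) : ℂ) = ((-(y₀ * Real.exp (T * τ / 2)) : ℝ) : ℂ) := by
      push_cast
      simp only [hP2_def] at hP2τ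
      rw [hP2τ]
      push_cast
      ring
    rw [hy₁]
    exact_mod_cast h4
  have hy1neg : y₁ < 0 := by
    rw [hy1form]
    have := Real.exp_pos (T * τ / 2)
    nlinarith
  refine ⟨hDT, hy1neg, ?_⟩
  -- relate τ to ω
  set ω : ℝ := Real.sqrt (4 * D - T ^ 2) with hω_def
  have hωpos : 0 < ω := Real.sqrt_pos.mpr hDT
  have hωσ : ω = |σ| := by
    rw [hω_def, ← hreal, Real.sqrt_sq_eq_abs]
  have hωτ : ω * τ = 2 * π := by
    rw [hωσ]
    have h1 : |σ| * τ = |σ * τ| := by rw [abs_mul, abs_of_pos hτ]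
    rw [h1, hστ]
    rcases hn1 with rfl | rfl
    · push_cast
      rw [mul_one, abs_of_pos (by positivity : (0:ℝ) < 2 * π)]
    · push_cast
      rw [show 2 * π * (-1 : ℝ) = -(2 * π) by ring, abs_neg,
        abs_of_pos (by positivity : (0:ℝ) < 2 * π)]
  have hTτ : T * τ / 2 = π * T / ω := by
    have hτeq : τ = 2 * π / ω := by
      rw [eq_div_iff hωpos.ne']
      linear_combination hωτ
    rw [hτeq]
    field_simp
  rw [hTτ] at hy1form
  -- the eventually-constant integral
  have hδ : 0 < min y₀ (-y₁) := lt_min hy₀ (by linarith)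
  have heq : (fun ε : ℝ =>
        (∫ y in y₁..(-ε), (-1) / (D * y)) + ∫ y in ε..y₀, (-1) / (D * y))
      =ᶠ[nhdsWithin 0 (Ioi 0)] fun _ => π * T / (D * ω) := by
    filter_upwards [Ioo_mem_nhdsGT_of_mem (left_mem_Ico.mpr hδ)] with ε hε
    obtain ⟨hε0, hεδ⟩ := hε
    have hεy₀ : ε < y₀ := lt_of_lt_of_le hεδ (min_le_left _ _)
    have hεy₁ : y₁ < -ε := by
      have := lt_of_lt_of_le hεδ (min_le_right _ _)
      linarith
    have hrw : ∀ a b : ℝ, (∫ y in a..b, (-1) / (D * y)) = (-1 / D) * ∫ y in a..b, 1 / y := by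
      intro a b
      rw [← intervalIntegral.integral_const_mul]
      congr 1
      funext y
      rw [div_mul_eq_div_div, mul_one_div]
    have h0a : (0 : ℝ) ∉ uIcc y₁ (-ε) := by
      rw [Set.uIcc_of_le hεy₁.le]
      intro h
      have := h.2
      linarith
    have h0b : (0 : ℝ) ∉ uIcc ε y₀ := by
      rw [Set.uIcc_of_le hεy₀.le]
      intro h
      have := h.1
      linarith
    rw [hrw, hrw, integral_one_div h0a, integral_one_div h0b]
    have hny₁ : 0 < -y₁ := by linarith
    have e1 : (-ε) / y₁ = ε / (-y₁) := by
      rw [div_neg, neg_div]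
    rw [e1, Real.log_div hε0.ne' hny₁.ne', Real.log_div hy₀.ne' hε0.ne']
    have e2 : Real.log (-y₁) = Real.log y₀ + π * T / ω := by
      rw [show -y₁ = y₀ * Real.exp (π * T / ω) by rw [hy1form]; ring,
        Real.log_mul hy₀.ne' (Real.exp_pos _).ne', Real.log_exp]
    rw [e2]
    ring
  exact Tendsto.congr' heq.symm tendsto_const_nhds
end

section
/- Assume a ≠ 0, let c ∈ ℝ and let y₀, y₁ ∈ I. If F(y₁, y₀) = cT, then log( (Dy₁² − aTy₁ + a²) / (Dy₀² − aTy₀ + a²) ) = T·( 2Dc + ∫_{y₁}^{y₀} a/(Dy² − aTy + a²) dy ). Moreover, if in addition D ≠ 0, then the converse also holds: this logarithmic identity implies F(y₁, y₀) = cT, so the two equalities are equivalent. -/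
open Set

/-- The index-like function `F(y₁, y₀) = ∫_{y₁}^{y₀} (−y)/(Dy² − aTy + a²) dy`. -/
noncomputable def Fidx (a T D : ℝ) (y₁ y₀ : ℝ) : ℝ :=
  ∫ y in y₁..y₀, (-y) / (D * y ^ 2 - a * T * y + a ^ 2)

/-- The interval `I = (μ₁, μ₂)`: the connected component of
`{y : Dy² − aTy + a² > 0}` containing `0`. -/
def Iset (a T D : ℝ) : Set ℝ :=
  connectedComponentIn {y : ℝ | 0 < D * y ^ 2 - a * T * y + a ^ 2} 0

lemma key_log_eq (a T D y₀ y₁ : ℝ)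
    (h₀ : y₀ ∈ Iset a T D) (h₁ : y₁ ∈ Iset a T D) :
    Real.log ((D * y₁ ^ 2 - a * T * y₁ + a ^ 2) / (D * y₀ ^ 2 - a * T * y₀ + a ^ 2))
      = 2 * D * Fidx a T D y₁ y₀
        + T * ∫ y in y₁..y₀, a / (D * y ^ 2 - a * T * y + a ^ 2) := by
  set V : ℝ → ℝ := fun y => D * y ^ 2 - a * T * y + a ^ 2 with hVdef
  have hsub : uIcc y₁ y₀ ⊆ Iset a T D :=
    (isPreconnected_connectedComponentIn.ordConnected).uIcc_subset h₁ h₀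
  have hpos : ∀ y ∈ uIcc y₁ y₀, 0 < V y := by
    intro y hy
    have : y ∈ {y : ℝ | 0 < D * y ^ 2 - a * T * y + a ^ 2} :=
      connectedComponentIn_subset _ _ (hsub hy)
    exact this
  have hne : ∀ y ∈ uIcc y₁ y₀, V y ≠ 0 := fun y hy => (hpos y hy).ne'
  have hVcont : Continuous V := by fun_prop
  have hcontOn : ∀ (g : ℝ → ℝ), Continuous g →
      ContinuousOn (fun y => g y / V y) (uIcc y₁ y₀) := fun g hg =>
    (hg.continuousOn).div hVcont.continuousOn hne
  have hInt1 : IntervalIntegrable (fun y => (2 * D * y - a * T) / V y) MeasureTheory.volume y₁ y₀ :=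
    (hcontOn _ (by fun_prop)).intervalIntegrable
  have hIntF : IntervalIntegrable (fun y => (-y) / V y) MeasureTheory.volume y₁ y₀ :=
    (hcontOn _ (by fun_prop)).intervalIntegrable
  have hIntA : IntervalIntegrable (fun y => a / V y) MeasureTheory.volume y₁ y₀ :=
    (hcontOn _ (by fun_prop)).intervalIntegrable
  have hderiv : ∀ y ∈ uIcc y₁ y₀,
      HasDerivAt (fun y => Real.log (V y)) ((2 * D * y - a * T) / V y) y := by
    intro y hy
    have hv : HasDerivAt V (2 * D * y - a * T) y := by
      have h1 := (((hasDerivAt_pow 2 y).const_mul D).sub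
          ((hasDerivAt_id y).const_mul (a * T))).add_const (a ^ 2)
      refine h1.congr_deriv ?_
      push_cast
      ring
    exact hv.log (hne y hy)
  have h1 : ∫ y in y₁..y₀, (2 * D * y - a * T) / V y
      = Real.log (V y₀) - Real.log (V y₁) :=
    intervalIntegral.integral_eq_sub_of_hasDerivAt hderiv hInt1
  have h2 : 2 * D * Fidx a T D y₁ y₀ + T * (∫ y in y₁..y₀, a / V y)
      = ∫ y in y₁..y₀, (2 * D * ((-y) / V y) + T * (a / V y)) := by
    rw [intervalIntegral.integral_add (hIntF.const_mul _) (hIntA.const_mul _),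
      intervalIntegral.integral_const_mul, intervalIntegral.integral_const_mul]
    rfl
  have h3 : ∀ y : ℝ, 2 * D * ((-y) / V y) + T * (a / V y)
      = -((2 * D * y - a * T) / V y) := by
    intro y
    rw [mul_div_assoc' , mul_div_assoc', ← add_div, ← neg_div]
    ring_nf
  have h4 : (∫ y in y₁..y₀, (2 * D * ((-y) / V y) + T * (a / V y)))
      = -(Real.log (V y₀) - Real.log (V y₁)) := by
    rw [← h1, ← intervalIntegral.integral_neg]
    exact intervalIntegral.integral_congr fun y _ => h3 y
  have h5 : Real.log (V y₁ / V y₀) = Real.log (V y₁) - Real.log (V y₀) :=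
    Real.log_div (hne y₁ left_mem_uIcc) (hne y₀ right_mem_uIcc)
  calc Real.log ((D * y₁ ^ 2 - a * T * y₁ + a ^ 2) / (D * y₀ ^ 2 - a * T * y₀ + a ^ 2))
      = Real.log (V y₁ / V y₀) := rfl
    _ = Real.log (V y₁) - Real.log (V y₀) := h5
    _ = -(Real.log (V y₀) - Real.log (V y₁)) := by ring
    _ = ∫ y in y₁..y₀, (2 * D * ((-y) / V y) + T * (a / V y)) := h4.symm
    _ = 2 * D * Fidx a T D y₁ y₀ + T * ∫ y in y₁..y₀, a / V y := h2.symm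

/-- For `a ≠ 0` and `y₀, y₁ ∈ I`: if `F(y₁, y₀) = cT` then
`log(V(0,y₁)/V(0,y₀)) = T·(2Dc + ∫_{y₁}^{y₀} a/V(0,y) dy)`, where
`V(0,y) = Dy² − aTy + a²`; moreover for `D ≠ 0` the two equalities are equivalent. -/
theorem stmt_14 (a T D c y₀ y₁ : ℝ) (ha : a ≠ 0)
    (h₀ : y₀ ∈ Iset a T D) (h₁ : y₁ ∈ Iset a T D) :
    (Fidx a T D y₁ y₀ = c * T →
      Real.log ((D * y₁ ^ 2 - a * T * y₁ + a ^ 2) / (D * y₀ ^ 2 - a * T * y₀ + a ^ 2))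
        = T * (2 * D * c + ∫ y in y₁..y₀, a / (D * y ^ 2 - a * T * y + a ^ 2)))
    ∧ (D ≠ 0 →
      (Real.log ((D * y₁ ^ 2 - a * T * y₁ + a ^ 2) / (D * y₀ ^ 2 - a * T * y₀ + a ^ 2))
          = T * (2 * D * c + ∫ y in y₁..y₀, a / (D * y ^ 2 - a * T * y + a ^ 2))
        ↔ Fidx a T D y₁ y₀ = c * T)) := by
  have hkey := key_log_eq a T D y₀ y₁ h₀ h₁
  constructor
  · intro hF
    rw [hkey, hF]; ring
  · intro hD
    constructor
    · intro h
      rw [hkey] at h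
      have h2D : (2 * D) ≠ 0 := mul_ne_zero two_ne_zero hD
      have : 2 * D * Fidx a T D y₁ y₀ = 2 * D * (c * T) := by linarith
      exact mul_left_cancel₀ h2D this
    · intro hF
      rw [hkey, hF]; ring
end

section
/- Assume a < 0 and 4D − T² > 0, and set c = 2π/(D·√(4D − T²)). Let y₀, y₁ ∈ ℝ with y₀ ≥ 0 and y₁ ≤ 0, and suppose ∫_{y₁}^{y₀} (−y)/(Dy² − aTy + a²) dy = cT. Then the number τ = 4π/√(4D − T²) + ∫_{y₁}^{y₀} a/(Dy² − aTy + a²) dy is strictly positive, and there exists a differentiable Ψ = (Ψ₁, Ψ₂) : ℝ → ℝ² with Ψ₁'(t) = TΨ₁(t) − Ψ₂(t) and Ψ₂'(t) = DΨ₁(t) − a for all t, such that Ψ(0) = (0, y₀), Ψ(τ) = (0, y₁), and Ψ₁(t) < 0 for all t ∈ (0, τ); that is, y₁ is the image of y₀ by the left Poincaré half-map of the Liénard system associated to the section {x = 0}, and τ is the corresponding left flight time. -/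
/-!
Put `ω = √(4D - T²)/2`. Every orbit spirals around the focus `(a/D, aT/D)`,
`x(t) = a/D + k e^{Tt/2} cos (ωt + φ)`. Seen from the focus, a point `(0, y)` of the section has
polar angle `θ(y) = arctan ((Dy - aT/2)/(-aω))`, and `D V(y) cos² θ(y) = a²ω²` with
`V(y) = Dy² - aTy + a²`. Both integrals are elementary in `θ` and `log V`: the one in `τ` gives
`ωτ = 2π + θ(y₁) - θ(y₀)`, and the hypothesis on the other becomes `V(y₁) = e^{Tτ} V(y₀)`, so the
spiral leaving `(0, y₀)` at phase `θ(y₀)` is back at `(0, y₁)` at time `τ`. On `[0, τ]` the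
function `e^{Tt/2} cos (ωt + θ(y₀))` first decreases and then increases, and it takes the same
value at both ends, so `x < 0` in between.
-/

open Real Set

theorem lt_max_of_strictAntiOn_of_strictMonoOn {f : ℝ → ℝ} {a m b t : ℝ}
    (hanti : StrictAntiOn f (Icc a m)) (hmono : StrictMonoOn f (Icc m b)) (ham : a ≤ m)
    (hmb : m ≤ b) (ht : t ∈ Ioo a b) : f t < max (f a) (f b) := by
  rcases le_or_gt t m with htm | hmt
  · exact lt_max_of_lt_left (hanti ⟨le_rfl, ham⟩ ⟨ht.1.le, htm⟩ ht.1)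
  · exact lt_max_of_lt_right (hmono ⟨hmt.le, ht.2.le⟩ ⟨hmb, le_rfl⟩ ht.2)

namespace Lienard

noncomputable def dampedCos (T ω φ t : ℝ) : ℝ := exp (T * t / 2) * cos (ω * t + φ)

noncomputable def dampedSin (T ω φ t : ℝ) : ℝ := exp (T * t / 2) * sin (ω * t + φ)

section DampedOscillation

variable {T ω φ : ℝ}

theorem continuous_dampedCos : Continuous (dampedCos T ω φ) := by
  unfold dampedCos; fun_prop

theorem hasDerivAt_exp_mul_half (t : ℝ) :
    HasDerivAt (fun s => exp (T * s / 2)) (exp (T * t / 2) * (T / 2)) t := by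
  simpa using (((hasDerivAt_id t).const_mul T).div_const 2).exp

theorem hasDerivAt_mul_add (t : ℝ) : HasDerivAt (fun s => ω * s + φ) ω t := by
  simpa using ((hasDerivAt_id t).const_mul ω).add_const φ

theorem hasDerivAt_dampedCos (t : ℝ) :
    HasDerivAt (dampedCos T ω φ) (T / 2 * dampedCos T ω φ t - ω * dampedSin T ω φ t) t :=
  ((hasDerivAt_exp_mul_half t).mul (hasDerivAt_mul_add t).cos).congr_deriv
    (by simp only [dampedCos, dampedSin]; ring)

theorem hasDerivAt_dampedSin (t : ℝ) :
    HasDerivAt (dampedSin T ω φ) (T / 2 * dampedSin T ω φ t + ω * dampedCos T ω φ t) t :=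
  ((hasDerivAt_exp_mul_half t).mul (hasDerivAt_mul_add t).sin).congr_deriv
    (by simp only [dampedCos, dampedSin]; ring)

theorem half_mul_dampedCos_sub_mul_dampedSin (hω : ω ≠ 0) (t : ℝ) :
    T / 2 * dampedCos T ω φ t - ω * dampedSin T ω φ t =
      -(ω / cos (arctan (T / (2 * ω)))) * exp (T * t / 2) *
        sin (ω * t + φ - arctan (T / (2 * ω))) := by
  set β := arctan (T / (2 * ω)) with hβ
  have hcos : cos β ≠ 0 := (cos_arctan_pos _).ne'
  have hsin : sin β = T / (2 * ω) * cos β := by rw [← tan_mul_cos hcos, hβ, tan_arctan]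
  simp only [dampedCos, dampedSin]
  rw [sin_sub, hsin]
  field_simp
  ring

theorem strictAntiOn_dampedCos (hω : 0 < ω) {t₁ t₂ : ℝ}
    (h₁ : arctan (T / (2 * ω)) ≤ ω * t₁ + φ) (h₂ : ω * t₂ + φ ≤ arctan (T / (2 * ω)) + π) :
    StrictAntiOn (dampedCos T ω φ) (Icc t₁ t₂) := by
  refine strictAntiOn_of_hasDerivWithinAt_neg (convex_Icc t₁ t₂) continuous_dampedCos.continuousOn
    (fun t _ => (hasDerivAt_dampedCos t).hasDerivWithinAt) fun t ht => ?_
  rw [interior_Icc] at ht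
  have hsin : 0 < sin (ω * t + φ - arctan (T / (2 * ω))) := by
    apply sin_pos_of_pos_of_lt_pi <;> nlinarith [ht.1, ht.2]
  rw [half_mul_dampedCos_sub_mul_dampedSin hω.ne', neg_mul, neg_mul, neg_lt_zero]
  have := cos_arctan_pos (T / (2 * ω))
  positivity

theorem strictMonoOn_dampedCos (hω : 0 < ω) {t₁ t₂ : ℝ}
    (h₁ : arctan (T / (2 * ω)) + π ≤ ω * t₁ + φ)
    (h₂ : ω * t₂ + φ ≤ arctan (T / (2 * ω)) + 2 * π) :
    StrictMonoOn (dampedCos T ω φ) (Icc t₁ t₂) := by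
  refine strictMonoOn_of_hasDerivWithinAt_pos (convex_Icc t₁ t₂) continuous_dampedCos.continuousOn
    (fun t _ => (hasDerivAt_dampedCos t).hasDerivWithinAt) fun t ht => ?_
  rw [interior_Icc] at ht
  have hsin : sin (ω * t + φ - arctan (T / (2 * ω))) < 0 := by
    rw [← sin_sub_two_pi]
    apply sin_neg_of_neg_of_neg_pi_lt <;> nlinarith [ht.1, ht.2]
  rw [half_mul_dampedCos_sub_mul_dampedSin hω.ne', neg_mul, neg_mul, neg_pos]
  have := cos_arctan_pos (T / (2 * ω))
  exact mul_neg_of_pos_of_neg (by positivity) hsin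

theorem dampedCos_lt_max (hω : 0 < ω) {φ τ t : ℝ} (hφ : arctan (T / (2 * ω)) ≤ φ)
    (hφπ : φ ≤ arctan (T / (2 * ω)) + π) (hτπ : arctan (T / (2 * ω)) + π ≤ ω * τ + φ)
    (hτ : ω * τ + φ ≤ arctan (T / (2 * ω)) + 2 * π) (ht : t ∈ Ioo 0 τ) :
    dampedCos T ω φ t < max (cos φ) (dampedCos T ω φ τ) := by
  obtain ⟨m, hωm⟩ : ∃ m, ω * m + φ = arctan (T / (2 * ω)) + π :=
    ⟨(arctan (T / (2 * ω)) + π - φ) / ω, by rw [mul_div_cancel₀ _ hω.ne']; ring⟩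
  have hm : 0 ≤ m := nonneg_of_mul_nonneg_right (by linarith) hω
  have hmτ : m ≤ τ := le_of_mul_le_mul_left (by linarith) hω
  simpa [dampedCos] using lt_max_of_strictAntiOn_of_strictMonoOn
    (strictAntiOn_dampedCos hω (by simpa using hφ) hωm.le)
    (strictMonoOn_dampedCos hω hωm.ge hτ) hm hmτ ht

end DampedOscillation

section LinearSystem

variable {a T D ω : ℝ}

theorem hasDerivAt_lienard_fst (x₀ k φ t : ℝ) :
    HasDerivAt (fun s => x₀ + k * dampedCos T ω φ s)
      (T * (x₀ + k * dampedCos T ω φ t) -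
        (T * x₀ + k * (T / 2 * dampedCos T ω φ t + ω * dampedSin T ω φ t))) t :=
  ((hasDerivAt_dampedCos t).const_mul k).const_add x₀ |>.congr_deriv (by ring)

theorem hasDerivAt_lienard_snd (hωD : T ^ 2 / 4 + ω ^ 2 = D) {x₀ : ℝ} (hx₀ : D * x₀ = a)
    (k φ t : ℝ) :
    HasDerivAt (fun s => T * x₀ + k * (T / 2 * dampedCos T ω φ s + ω * dampedSin T ω φ s))
      (D * (x₀ + k * dampedCos T ω φ t) - a) t :=
  ((((hasDerivAt_dampedCos t).const_mul (T / 2)).add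
    ((hasDerivAt_dampedSin t).const_mul ω)).const_mul k).const_add (T * x₀) |>.congr_deriv
    (by rw [← hx₀, ← hωD]; ring)

end LinearSystem

-- The polar angle of `(0, y)` about the focus, in the coordinates in which the flow is the
-- damped rotation `(dampedCos, dampedSin)`.
noncomputable def sectionAngle (a T D ω y : ℝ) : ℝ := arctan ((D * y - a * T / 2) / (-a * ω))

theorem sectionAngle_mem_Ioo (a T D ω y : ℝ) :
    sectionAngle a T D ω y ∈ Ioo (-(π / 2)) (π / 2) :=
  arctan_mem_Ioo _

section SectionAngle

variable {a T D ω : ℝ}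

theorem mul_quadratic_eq (hωD : T ^ 2 / 4 + ω ^ 2 = D) (y : ℝ) :
    D * (D * y ^ 2 - a * T * y + a ^ 2) = (D * y - a * T / 2) ^ 2 + (a * ω) ^ 2 := by
  subst hωD; ring

theorem quadratic_pos (ha : a ≠ 0) (hω : ω ≠ 0) (hωD : T ^ 2 / 4 + ω ^ 2 = D) (y : ℝ) :
    0 < D * y ^ 2 - a * T * y + a ^ 2 := by
  have hD : 0 < D := by rw [← hωD]; positivity
  exact pos_of_mul_pos_right (by rw [mul_quadratic_eq hωD]; positivity) hD.le

theorem one_add_sq_sectionAngle_arg (ha : a ≠ 0) (hω : ω ≠ 0) (hωD : T ^ 2 / 4 + ω ^ 2 = D)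
    (y : ℝ) : 1 + ((D * y - a * T / 2) / (-a * ω)) ^ 2 =
      D * (D * y ^ 2 - a * T * y + a ^ 2) / (a * ω) ^ 2 := by
  rw [mul_quadratic_eq hωD]
  field_simp
  ring

theorem hasDerivAt_sectionAngle (ha : a ≠ 0) (hω : ω ≠ 0) (hωD : T ^ 2 / 4 + ω ^ 2 = D)
    (y : ℝ) : HasDerivAt (sectionAngle a T D ω) (-(a * ω) / (D * y ^ 2 - a * T * y + a ^ 2)) y := by
  have hlin : HasDerivAt (fun y => (D * y - a * T / 2) / (-a * ω)) (D / (-a * ω)) y := by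
    simpa using (((hasDerivAt_id y).const_mul D).sub_const (a * T / 2)).div_const (-a * ω)
  have hD : D ≠ 0 := by rw [← hωD]; positivity
  have hV := (quadratic_pos ha hω hωD y).ne'
  refine hlin.arctan.congr_deriv ?_
  rw [one_add_sq_sectionAngle_arg ha hω hωD]
  field_simp

theorem integral_div_quadratic (ha : a ≠ 0) (hω : ω ≠ 0) (hωD : T ^ 2 / 4 + ω ^ 2 = D)
    (y₀ y₁ : ℝ) : ∫ y in y₁..y₀, a / (D * y ^ 2 - a * T * y + a ^ 2) =
      (sectionAngle a T D ω y₁ - sectionAngle a T D ω y₀) / ω := by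
  have hderiv (y : ℝ) : HasDerivAt (fun y => -sectionAngle a T D ω y / ω)
      (a / (D * y ^ 2 - a * T * y + a ^ 2)) y :=
    (hasDerivAt_sectionAngle ha hω hωD y).neg.div_const ω |>.congr_deriv
      (by field_simp)
  rw [intervalIntegral.integral_eq_sub_of_hasDerivAt (fun y _ => hderiv y)
    ((continuous_const.div (by fun_prop) fun y => (quadratic_pos ha hω hωD y).ne').intervalIntegrable
      _ _)]
  ring

theorem integral_neg_div_quadratic (ha : a ≠ 0) (hω : ω ≠ 0) (hωD : T ^ 2 / 4 + ω ^ 2 = D)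
    (y₀ y₁ : ℝ) : ∫ y in y₁..y₀, -y / (D * y ^ 2 - a * T * y + a ^ 2) =
      (log (D * y₁ ^ 2 - a * T * y₁ + a ^ 2) - log (D * y₀ ^ 2 - a * T * y₀ + a ^ 2)) / (2 * D) +
        T / (2 * D * ω) * (sectionAngle a T D ω y₀ - sectionAngle a T D ω y₁) := by
  have hD : D ≠ 0 := by rw [← hωD]; positivity
  have hderiv (y : ℝ) : HasDerivAt
      (fun y => -log (D * y ^ 2 - a * T * y + a ^ 2) / (2 * D) +
        T / (2 * D * ω) * sectionAngle a T D ω y)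
      (-y / (D * y ^ 2 - a * T * y + a ^ 2)) y := by
    have hV := quadratic_pos ha hω hωD y
    have hquad : HasDerivAt (fun y => D * y ^ 2 - a * T * y + a ^ 2) (2 * D * y - a * T) y := by
      simpa [mul_comm, mul_left_comm] using
        (((hasDerivAt_pow 2 y).const_mul D).sub ((hasDerivAt_id y).const_mul (a * T))).add_const
          (a ^ 2)
    refine ((hquad.log hV.ne').neg.div_const (2 * D)).add
      ((hasDerivAt_sectionAngle ha hω hωD y).const_mul _) |>.congr_deriv ?_
    field_simp
    ring
  rw [intervalIntegral.integral_eq_sub_of_hasDerivAt (fun y _ => hderiv y)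
    ((Continuous.div (by fun_prop) (by fun_prop) fun y =>
      (quadratic_pos ha hω hωD y).ne').intervalIntegrable _ _)]
  ring

theorem quadratic_mul_cos_sq_sectionAngle (ha : a ≠ 0) (hω : ω ≠ 0)
    (hωD : T ^ 2 / 4 + ω ^ 2 = D) (y : ℝ) :
    D * (D * y ^ 2 - a * T * y + a ^ 2) * cos (sectionAngle a T D ω y) ^ 2 = (a * ω) ^ 2 := by
  have hD : D ≠ 0 := by rw [← hωD]; positivity
  have hV := (quadratic_pos ha hω hωD y).ne'
  rw [sectionAngle, cos_sq_arctan, one_add_sq_sectionAngle_arg ha hω hωD]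
  generalize D * y ^ 2 - a * T * y + a ^ 2 = V at hV ⊢
  field_simp

theorem cos_sectionAngle_pos (y : ℝ) : 0 < cos (sectionAngle a T D ω y) := cos_arctan_pos _

theorem sectionAngle_zero (ha : a ≠ 0) (hω : ω ≠ 0) :
    sectionAngle a T D ω 0 = arctan (T / (2 * ω)) := by
  rw [sectionAngle]
  congr 1
  field_simp
  ring

theorem sectionAngle_mono (ha : a < 0) (hD : 0 ≤ D) (hω : 0 < ω) :
    Monotone (sectionAngle a T D ω) := fun y₁ y₂ hy => by
  have : 0 < -a * ω := by nlinarith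
  unfold sectionAngle
  gcongr

theorem add_mul_eq_of_mul_cos_sectionAngle (ha : a ≠ 0) (hD : D ≠ 0) (hω : ω ≠ 0) {A y : ℝ}
    (hA : A * cos (sectionAngle a T D ω y) = -(a / D)) :
    T * (a / D) + A * (T / 2 * cos (sectionAngle a T D ω y) + ω * sin (sectionAngle a T D ω y)) =
      y := by
  have hsin : sin (sectionAngle a T D ω y) =
      (D * y - a * T / 2) / (-a * ω) * cos (sectionAngle a T D ω y) := by
    rw [sectionAngle, ← tan_mul_cos (cos_arctan_pos _).ne', tan_arctan]
  calc _ = T * (a / D) + A * cos (sectionAngle a T D ω y) *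
        (T / 2 + ω * ((D * y - a * T / 2) / (-a * ω))) := by rw [hsin]; ring
    _ = y := by rw [hA]; field_simp; ring

theorem exp_mul_cos_sectionAngle_eq (ha : a ≠ 0) (hω : ω ≠ 0) (hωD : T ^ 2 / 4 + ω ^ 2 = D)
    {y₀ y₁ τ : ℝ} (hτ : ω * τ = 2 * π + sectionAngle a T D ω y₁ - sectionAngle a T D ω y₀)
    (hF : ∫ y in y₁..y₀, -y / (D * y ^ 2 - a * T * y + a ^ 2) = π * T / (D * ω)) :
    exp (T * τ / 2) * cos (sectionAngle a T D ω y₁) = cos (sectionAngle a T D ω y₀) := by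
  have hD : 0 < D := by rw [← hωD]; positivity
  have hV₀ := quadratic_pos ha hω hωD y₀
  have hV₁ := quadratic_pos ha hω hωD y₁
  have hlog : log (D * y₁ ^ 2 - a * T * y₁ + a ^ 2) =
      log (D * y₀ ^ 2 - a * T * y₀ + a ^ 2) + T * τ := by
    rw [integral_neg_div_quadratic ha hω hωD] at hF
    generalize log (D * y₀ ^ 2 - a * T * y₀ + a ^ 2) = L₀ at hF ⊢
    generalize log (D * y₁ ^ 2 - a * T * y₁ + a ^ 2) = L₁ at hF ⊢
    field_simp at hF
    apply mul_left_cancel₀ hω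
    linear_combination hF - T * hτ
  have hV : D * y₁ ^ 2 - a * T * y₁ + a ^ 2 = (D * y₀ ^ 2 - a * T * y₀ + a ^ 2) * exp (T * τ) := by
    rw [← exp_log hV₁, hlog, exp_add, exp_log hV₀]
  have hexp : exp (T * τ / 2) ^ 2 = exp (T * τ) := by rw [sq, ← exp_add]; ring_nf
  have hsq : (exp (T * τ / 2) * cos (sectionAngle a T D ω y₁)) ^ 2 =
      cos (sectionAngle a T D ω y₀) ^ 2 := by
    have h₀ := quadratic_mul_cos_sq_sectionAngle ha hω hωD y₀
    have h₁ := quadratic_mul_cos_sq_sectionAngle ha hω hωD y₁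
    rw [hV] at h₁
    rw [mul_pow, hexp]
    apply mul_left_cancel₀ (mul_pos hD hV₀).ne'
    linear_combination h₁ - h₀
  exact (sq_eq_sq₀ (mul_nonneg (exp_pos _).le (cos_sectionAngle_pos _).le)
    (cos_sectionAngle_pos _).le).1 hsq

theorem exists_left_half_orbit (ha : a < 0) (hω : 0 < ω) (hωD : T ^ 2 / 4 + ω ^ 2 = D)
    {y₀ y₁ τ : ℝ} (hy₀ : 0 ≤ y₀) (hy₁ : y₁ ≤ 0)
    (hτ : ω * τ = 2 * π + sectionAngle a T D ω y₁ - sectionAngle a T D ω y₀)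
    (hreturn : exp (T * τ / 2) * cos (sectionAngle a T D ω y₁) = cos (sectionAngle a T D ω y₀)) :
    ∃ Ψ₁ Ψ₂ : ℝ → ℝ,
      (∀ t : ℝ, HasDerivAt Ψ₁ (T * Ψ₁ t - Ψ₂ t) t) ∧
      (∀ t : ℝ, HasDerivAt Ψ₂ (D * Ψ₁ t - a) t) ∧
      Ψ₁ 0 = 0 ∧ Ψ₂ 0 = y₀ ∧ Ψ₁ τ = 0 ∧ Ψ₂ τ = y₁ ∧
      ∀ t ∈ Ioo 0 τ, Ψ₁ t < 0 := by
  have hD : 0 < D := by rw [← hωD]; positivity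
  have hβ₀ : arctan (T / (2 * ω)) ≤ sectionAngle a T D ω y₀ :=
    (sectionAngle_zero ha.ne hω.ne').symm.trans_le (sectionAngle_mono ha hD.le hω hy₀)
  have hβ₁ : sectionAngle a T D ω y₁ ≤ arctan (T / (2 * ω)) :=
    (sectionAngle_mono ha hD.le hω hy₁).trans_eq (sectionAngle_zero ha.ne hω.ne')
  obtain ⟨hβ_gt, hβ_lt⟩ := arctan_mem_Ioo (T / (2 * ω))
  obtain ⟨-, hθ₀_lt⟩ := sectionAngle_mem_Ioo a T D ω y₀
  obtain ⟨hθ₁_gt, -⟩ := sectionAngle_mem_Ioo a T D ω y₁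
  set θ₀ := sectionAngle a T D ω y₀
  set θ₁ := sectionAngle a T D ω y₁
  set k := -(a / D) / cos θ₀
  have hk : k * cos θ₀ = -(a / D) := div_mul_cancel₀ _ (cos_sectionAngle_pos _).ne'
  have hphase : ω * τ + θ₀ = θ₁ + 2 * π := by linarith
  have hkτ : k * dampedCos T ω θ₀ τ = -(a / D) := by
    rw [dampedCos, hphase, cos_add_two_pi, ← mul_assoc, mul_assoc k, hreturn, hk]
  refine ⟨fun t => a / D + k * dampedCos T ω θ₀ t,
    fun t => T * (a / D) + k * (T / 2 * dampedCos T ω θ₀ t + ω * dampedSin T ω θ₀ t),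
    hasDerivAt_lienard_fst _ _ _, hasDerivAt_lienard_snd hωD (mul_div_cancel₀ _ hD.ne') _ _,
    ?_, ?_, ?_, ?_, fun t ht => ?_⟩
  · simp [dampedCos, hk]
  · simpa [dampedCos, dampedSin] using add_mul_eq_of_mul_cos_sectionAngle ha.ne hD.ne' hω.ne' hk
  · simp only [hkτ]; ring
  · have hA : k * exp (T * τ / 2) * cos θ₁ = -(a / D) := by rw [mul_assoc, hreturn, hk]
    simp only [dampedCos, dampedSin, hphase, cos_add_two_pi, sin_add_two_pi]
    linear_combination add_mul_eq_of_mul_cos_sectionAngle ha.ne hD.ne' hω.ne' hA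
  · have hlt := dampedCos_lt_max hω hβ₀ (by linarith) (by linarith) (by linarith) ht
    have hk₀ : 0 < k := div_pos (neg_pos.2 (div_neg_of_neg_of_pos ha hD)) (cos_sectionAngle_pos _)
    rw [← mul_lt_mul_iff_of_pos_left hk₀, mul_max_of_nonneg _ _ hk₀.le, hk, hkτ, max_self] at hlt
    show a / D + k * _ < 0
    linarith

end SectionAngle

end Lienard

open Lienard in
/-- Case (iii) of the recovery theorem: for `a < 0`, `4D − T² > 0` and
`c = 2π/(D·√(4D − T²))`, if `y₀ ≥ 0 ≥ y₁` satisfy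
`∫_{y₁}^{y₀} (−y)/(Dy² − aTy + a²) dy = cT`, then
`τ = 4π/√(4D − T²) + ∫_{y₁}^{y₀} a/(Dy² − aTy + a²) dy` (i.e. `τ = 2Dc + ∫ a/V`)
is strictly positive and `y₁` is the image of `y₀` by the left Poincaré half-map
with left flight time `τ`: there is a solution `Ψ` of the Liénard system with
`Ψ(0) = (0, y₀)`, `Ψ(τ) = (0, y₁)`, and `Ψ₁ < 0` on `(0, τ)`. -/
theorem stmt_16 (a T D : ℝ) (ha : a < 0) (hDT : 0 < 4 * D - T ^ 2)
    (c : ℝ) (hc : c = 2 * Real.pi / (D * Real.sqrt (4 * D - T ^ 2)))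
    (y₀ y₁ : ℝ) (hy₀ : 0 ≤ y₀) (hy₁ : y₁ ≤ 0)
    (hF : (∫ y in y₁..y₀, (-y) / (D * y ^ 2 - a * T * y + a ^ 2)) = c * T)
    (τ : ℝ) (hτdef : τ = 4 * Real.pi / Real.sqrt (4 * D - T ^ 2)
      + ∫ y in y₁..y₀, a / (D * y ^ 2 - a * T * y + a ^ 2)) :
    0 < τ ∧
      ∃ Ψ₁ Ψ₂ : ℝ → ℝ,
        (∀ t : ℝ, HasDerivAt Ψ₁ (T * Ψ₁ t - Ψ₂ t) t) ∧
        (∀ t : ℝ, HasDerivAt Ψ₂ (D * Ψ₁ t - a) t) ∧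
        Ψ₁ 0 = 0 ∧ Ψ₂ 0 = y₀ ∧ Ψ₁ τ = 0 ∧ Ψ₂ τ = y₁ ∧
        ∀ t ∈ Ioo 0 τ, Ψ₁ t < 0 := by
  set ω := √(4 * D - T ^ 2) / 2 with hω_def
  have hω : 0 < ω := div_pos (sqrt_pos.2 hDT) two_pos
  have hsqrt : √(4 * D - T ^ 2) = 2 * ω := by rw [hω_def]; ring
  have hωD : T ^ 2 / 4 + ω ^ 2 = D := by rw [hω_def, div_pow, sq_sqrt hDT.le]; ring
  have hωτ : ω * τ = 2 * π + sectionAngle a T D ω y₁ - sectionAngle a T D ω y₀ := by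
    rw [hτdef, integral_div_quadratic ha.ne hω.ne' hωD, hsqrt]; field_simp; ring
  have hreturn := exp_mul_cos_sectionAngle_eq ha.ne hω.ne' hωD hωτ
    (by rw [hF, hc, hsqrt]; field_simp)
  refine ⟨pos_of_mul_pos_right ?_ hω.le, exists_left_half_orbit ha hω hωD hy₀ hy₁ hωτ hreturn⟩
  linarith [(sectionAngle_mem_Ioo a T D ω y₀).2, (sectionAngle_mem_Ioo a T D ω y₁).1, pi_pos]
end

section
/- Assume a = 0 and 4D − T² > 0 (so D > 0). Let y₀ > 0 and y₁ < 0 satisfy −y₁/y₀ = exp( πT / √(4D − T²) ) (equivalently, the Cauchy principal value of ∫_{y₁}^{y₀} (−1)/(Dy) dy equals cT with c = π/(D·√(4D − T²))). Then, with τ = 2π/√(4D − T²) > 0, there exists a differentiable Ψ = (Ψ₁, Ψ₂) : ℝ → ℝ² with Ψ₁'(t) = TΨ₁(t) − Ψ₂(t) and Ψ₂'(t) = DΨ₁(t) for all t, such that Ψ(0) = (0, y₀), Ψ(τ) = (0, y₁), and Ψ₁(t) < 0 for all t ∈ (0, τ); that is, y₁ is the image of y₀ by the left Poincaré half-map of the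 Liénard system with a = 0 associated to the section {x = 0}, and τ is the corresponding left flight time. -/
open Set

/-- Case (ii) of the recovery theorem: for `a = 0` and `4D − T² > 0`, if `y₀ > 0`
and `y₁ < 0` satisfy `−y₁/y₀ = exp(πT/√(4D − T²))` (i.e. the Cauchy principal value
of `∫_{y₁}^{y₀} (−1)/(Dy) dy` equals `cT` with `c = π/(D·√(4D − T²))`), then, with
`τ = 2π/√(4D − T²) > 0`, `y₁` is the image of `y₀` by the left Poincaré half-map of
the Liénard system with `a = 0`, with left flight time `τ`: there is a solution `Ψ`
of `x' = Tx − y`, `y' = Dx` with `Ψ(0) = (0, y₀)`, `Ψ(τ) = (0, y₁)`, and `Ψ₁ < 0`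
on `(0, τ)`. -/
theorem stmt_17 (T D : ℝ) (hDT : 0 < 4 * D - T ^ 2)
    (y₀ y₁ : ℝ) (hy₀ : 0 < y₀) (hy₁ : y₁ < 0)
    (hF : -y₁ / y₀ = Real.exp (Real.pi * T / Real.sqrt (4 * D - T ^ 2)))
    (τ : ℝ) (hτdef : τ = 2 * Real.pi / Real.sqrt (4 * D - T ^ 2)) :
    0 < τ ∧
      ∃ Ψ₁ Ψ₂ : ℝ → ℝ,
        (∀ t : ℝ, HasDerivAt Ψ₁ (T * Ψ₁ t - Ψ₂ t) t) ∧
        (∀ t : ℝ, HasDerivAt Ψ₂ (D * Ψ₁ t) t) ∧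
        Ψ₁ 0 = 0 ∧ Ψ₂ 0 = y₀ ∧ Ψ₁ τ = 0 ∧ Ψ₂ τ = y₁ ∧
        ∀ t ∈ Ioo 0 τ, Ψ₁ t < 0 := by
  set s : ℝ := Real.sqrt (4 * D - T ^ 2) with hs_def
  have hs : 0 < s := Real.sqrt_pos.mpr hDT
  have hs2 : s ^ 2 = 4 * D - T ^ 2 := Real.sq_sqrt hDT.le
  set α : ℝ := T / 2 with hα
  set ω : ℝ := s / 2 with hω
  have hωpos : 0 < ω := by positivity
  have hωne : ω ≠ 0 := hωpos.ne'
  have hτpos : 0 < τ := by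
    rw [hτdef]; positivity
  refine ⟨hτpos, ?_⟩
  set Ψ₁ : ℝ → ℝ := fun t => -(y₀ / ω) * (Real.exp (α * t) * Real.sin (ω * t)) with hΨ₁
  set Ψ₂ : ℝ → ℝ := fun t => α * Ψ₁ t + y₀ * (Real.exp (α * t) * Real.cos (ω * t)) with hΨ₂
  have he : ∀ t, HasDerivAt (fun t => Real.exp (α * t)) (α * Real.exp (α * t)) t := by
    intro t
    simpa [mul_comm] using ((hasDerivAt_id t).const_mul α).exp
  have hsin : ∀ t, HasDerivAt (fun t => Real.sin (ω * t)) (ω * Real.cos (ω * t)) t := by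
    intro t
    simpa [mul_comm] using ((hasDerivAt_id t).const_mul ω).sin
  have hcos : ∀ t, HasDerivAt (fun t => Real.cos (ω * t)) (-(ω * Real.sin (ω * t))) t := by
    intro t
    simpa [mul_comm] using ((hasDerivAt_id t).const_mul ω).cos
  have hd1 : ∀ t, HasDerivAt Ψ₁ (T * Ψ₁ t - Ψ₂ t) t := by
    intro t
    have h := (((he t).mul (hsin t))).const_mul (-(y₀ / ω))
    refine h.congr_deriv (Eq.symm ?_)
    simp only [hΨ₂, hΨ₁, hα]
    field_simp
    ring
  have hd2 : ∀ t, HasDerivAt Ψ₂ (D * Ψ₁ t) t := by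
    intro t
    have h := ((hd1 t).const_mul α).add (((he t).mul (hcos t)).const_mul y₀)
    refine h.congr_deriv (Eq.symm ?_)
    have hD : α ^ 2 + ω ^ 2 = D := by
      rw [hα, hω]
      nlinarith [hs2]
    have hu : y₀ / ω * ω = y₀ := div_mul_cancel₀ y₀ hωne
    have hT : T = 2 * α := by rw [hα]; ring
    simp only [hΨ₂, hΨ₁]
    linear_combination (y₀ / ω * (Real.exp (α * t) * Real.sin (ω * t))) * hD
      - ω * (Real.exp (α * t) * Real.sin (ω * t)) * hu
      + α * (y₀ / ω * (Real.exp (α * t) * Real.sin (ω * t))) * hT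
  have hωτ : ω * τ = Real.pi := by
    rw [hω, hτdef]
    field_simp
  have hατ : α * τ = Real.pi * T / s := by
    rw [hα, hτdef]
    field_simp
  refine ⟨Ψ₁, Ψ₂, hd1, hd2, ?_, ?_, ?_, ?_, ?_⟩
  · simp [hΨ₁]
  · simp [hΨ₂, hΨ₁]
  · simp [hΨ₁, hωτ]
  · have : y₁ = -(y₀ * Real.exp (Real.pi * T / s)) := by
      have := hF
      field_simp at this
      linarith [this]
    simp [hΨ₂, hΨ₁, hωτ, hατ, this]
  · intro t ht
    have h1 : 0 < ω * t := mul_pos hωpos ht.1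
    have h2 : ω * t < Real.pi := by
      calc ω * t < ω * τ := by exact (mul_lt_mul_iff_right₀ hωpos).mpr ht.2
        _ = Real.pi := hωτ
    have hsinpos : 0 < Real.sin (ω * t) := Real.sin_pos_of_pos_of_lt_pi h1 h2
    have : 0 < (y₀ / ω) * (Real.exp (α * t) * Real.sin (ω * t)) := by positivity
    simp only [hΨ₁]
    linarith
end

section
/- Let T = 0, let a > 0, let D ∈ ℝ, and let y₀ > 0 satisfy D·y₀² + a² > 0. Then the left flight time of the Liénard system with T = 0 between the points (0, y₀) and (0, −y₀) admits the two equivalent integral expressions: ∫_{−y₀}^{y₀} a/(Dy² + a²) dy = ∫_{−y₀}^{y₀} 1/√(a² + D·(y₀² − y²)) dy (note that a² + D·(y₀² − y²) > 0 for all y ∈ [−y₀, y₀], so both integrals are well defined). -/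
open Set

/-!
The substitution `y = φ(u) = a u / √S(u)`, `S(u) = a² + D (y₀² − u²)`, fixes `±y₀` and satisfies
`D φ(u)² + a² = a² (D y₀² + a²) / S(u)` and `φ'(u) = a (D y₀² + a²) / S(u)^{3/2} ≥ 0`.
Hence `a / (D φ² + a²) · φ' = 1 / √S`, and the two integrals agree by a monotone change of
variables. Positivity of `S` on `[−y₀, y₀]` comes from `S` being affine in `u²`, with values
`a² + D y₀²` at `u = 0` and `a²` at `u² = y₀²`.
-/

noncomputable section

namespace LienardFlightTime

def radicand (a D y₀ u : ℝ) : ℝ := a ^ 2 + D * (y₀ ^ 2 - u ^ 2)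

def subst (a D y₀ u : ℝ) : ℝ := a * u / √(radicand a D y₀ u)

def substDeriv (a D y₀ u : ℝ) : ℝ := a * (D * y₀ ^ 2 + a ^ 2) / √(radicand a D y₀ u) ^ 3

variable {a D y₀ u : ℝ}

lemma radicand_pos (ha : a ≠ 0) (hV : 0 < D * y₀ ^ 2 + a ^ 2) (hu : u ^ 2 ≤ y₀ ^ 2) :
    0 < radicand a D y₀ u := by
  have ha2 : 0 < a ^ 2 := by positivity
  unfold radicand
  rcases le_or_gt 0 D with hD | hD <;> nlinarith

lemma subst_of_sq_eq (ha : 0 < a) (hu : u ^ 2 = y₀ ^ 2) : subst a D y₀ u = u := by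
  rw [subst, radicand, hu, sub_self, mul_zero, add_zero, Real.sqrt_sq ha.le]
  field_simp

lemma mul_sq_subst_add_sq (hS : 0 < radicand a D y₀ u) :
    D * subst a D y₀ u ^ 2 + a ^ 2 = a ^ 2 * (D * y₀ ^ 2 + a ^ 2) / radicand a D y₀ u := by
  rw [subst, div_pow, mul_pow, Real.sq_sqrt hS.le]
  field_simp
  rw [radicand]
  ring

lemma hasDerivAt_radicand : HasDerivAt (radicand a D y₀) (-(2 * D * u)) u := by
  have h := (((hasDerivAt_id' u).pow 2).const_sub (y₀ ^ 2)).const_mul D |>.const_add (a ^ 2)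
  refine h.congr_deriv ?_
  ring

lemma hasDerivAt_subst (hS : 0 < radicand a D y₀ u) :
    HasDerivAt (subst a D y₀) (substDeriv a D y₀ u) u := by
  have hsqrt : 0 < √(radicand a D y₀ u) := Real.sqrt_pos.2 hS
  have h := ((hasDerivAt_id' u).const_mul a).div (hasDerivAt_radicand.sqrt hS.ne') hsqrt.ne'
  refine h.congr_deriv ?_
  have hsq : √(radicand a D y₀ u) ^ 2 = radicand a D y₀ u := Real.sq_sqrt hS.le
  rw [substDeriv]
  field_simp
  rw [radicand] at hsq ⊢
  linear_combination a * hsq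

lemma substDeriv_nonneg (ha : 0 < a) (hV : 0 < D * y₀ ^ 2 + a ^ 2) :
    0 ≤ substDeriv a D y₀ u := by
  unfold substDeriv
  positivity

lemma div_comp_subst_mul_substDeriv (ha : a ≠ 0) (hV : 0 < D * y₀ ^ 2 + a ^ 2)
    (hS : 0 < radicand a D y₀ u) :
    a / (D * subst a D y₀ u ^ 2 + a ^ 2) * substDeriv a D y₀ u = 1 / √(radicand a D y₀ u) := by
  have hcube : √(radicand a D y₀ u) ^ 3 = √(radicand a D y₀ u) * radicand a D y₀ u := by
    rw [pow_succ, Real.sq_sqrt hS.le, mul_comm]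
  rw [mul_sq_subst_add_sq hS, substDeriv, hcube]
  field_simp

lemma sq_le_sq_of_mem_uIcc_neg (hu : u ∈ uIcc (-y₀) y₀) : u ^ 2 ≤ y₀ ^ 2 := by
  rw [mem_uIcc] at hu
  rcases hu with ⟨h₁, h₂⟩ | ⟨h₁, h₂⟩ <;> nlinarith

end LienardFlightTime

end

open LienardFlightTime in
theorem stmt_19_general (a D : ℝ) (ha : 0 < a) (y₀ : ℝ)
    (hV : 0 < D * y₀ ^ 2 + a ^ 2) :
    (∫ y in (-y₀)..y₀, a / (D * y ^ 2 + a ^ 2))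
      = ∫ y in (-y₀)..y₀, 1 / Real.sqrt (a ^ 2 + D * (y₀ ^ 2 - y ^ 2)) := by
  have hS : ∀ u ∈ uIcc (-y₀) y₀, 0 < radicand a D y₀ u := fun u hu =>
    radicand_pos ha.ne' hV (sq_le_sq_of_mem_uIcc_neg hu)
  have hderiv : ∀ u ∈ uIcc (-y₀) y₀, HasDerivAt (subst a D y₀) (substDeriv a D y₀ u) u :=
    fun u hu => hasDerivAt_subst (hS u hu)
  have hchange := intervalIntegral.integral_comp_mul_deriv_of_deriv_nonneg
    (g := fun y => a / (D * y ^ 2 + a ^ 2))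
    (continuousOn_of_forall_continuousAt fun u hu => (hderiv u hu).continuousAt)
    (fun u hu => hderiv u (Ioo_subset_Icc_self hu))
    (fun _ _ => substDeriv_nonneg ha hV)
  rw [subst_of_sq_eq ha (neg_sq y₀), subst_of_sq_eq ha rfl] at hchange
  rw [← hchange]
  refine intervalIntegral.integral_congr fun u hu => ?_
  exact div_comp_subst_mul_substDeriv ha.ne' hV (hS u hu)

/-- For the reversible (trace-zero) Liénard system `x' = −y`, `y' = Dx − a` with
`a > 0`, the left flight time between `(0, y₀)` and `(0, −y₀)` admits two equivalent
integral expressions: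
`∫_{−y₀}^{y₀} a/(Dy² + a²) dy = ∫_{−y₀}^{y₀} 1/√(a² + D(y₀² − y²)) dy`. -/
theorem stmt_19 (a D : ℝ) (ha : 0 < a) (y₀ : ℝ) (hy₀ : 0 < y₀)
    (hV : 0 < D * y₀ ^ 2 + a ^ 2) :
    (∫ y in (-y₀)..y₀, a / (D * y ^ 2 + a ^ 2))
      = ∫ y in (-y₀)..y₀, 1 / Real.sqrt (a ^ 2 + D * (y₀ ^ 2 - y ^ 2)) :=
  stmt_19_general a D ha y₀ hV
end
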